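/- Let I and Λ be finite sets of sizes a > 1 and b > 1 respectively. Then for every rational number α with B(a)B(b)/(2^(a²−a) · 2^(b²−b)) ≤ α < 1, there exist a finite group G and a Λ×I matrix P with entries in G such that χ(M[G;I,Λ;P]) = α. -/

import Mathlib

/-- A relation `ρ` is a *diagonal subsemigroup* with respect to multiplication `mul`:
it is reflexive and compatible with `mul`. -/
def IsDiagonal {S : Type*} (mul : S → S → S) (ρ : S → S → Prop) : Prop :=
  (∀ s, ρ s s) ∧ ∀ a b c d, ρ a b → ρ c d → ρ (mul a c) (mul b d)

/-- A relation `ρ` is a *congruence* with respect to `mul`. -/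
def IsCongruence {S : Type*} (mul : S → S → S) (ρ : S → S → Prop) : Prop :=
  Equivalence ρ ∧ ∀ a b c d, ρ a b → ρ c d → ρ (mul a c) (mul b d)

/-- The DSC coefficient: the number of congruences divided by the number of
diagonal subsemigroups. -/
noncomputable def chi {S : Type*} (mul : S → S → S) : ℚ :=
  (Nat.card {ρ : S → S → Prop // IsCongruence mul ρ} : ℚ) /
  (Nat.card {ρ : S → S → Prop // IsDiagonal mul ρ} : ℚ)

/-- The `m`-th Bell number: the number of equivalence relations on a set of size `m`. -/
noncomputable def bell (m : ℕ) : ℕ := Nat.card (Setoid (Fin m))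

/-- Multiplication of the Rees matrix semigroup `M[G;I,Λ;P]` on `I × G × Λ`:
`(i,g,λ)(j,h,μ) = (i, g * p_{λ j} * h, μ)`. -/
def rmul {G I Λ : Type*} [Group G] (P : Λ → I → G) (x y : I × G × Λ) : I × G × Λ :=
  ⟨x.1, x.2.1 * P x.2.2 y.1 * y.2.1, y.2.2⟩





section ZModLemmas
variable {p k : ℕ} (hp : p.Prime)

-- p^m for m ≤ k, viewed in ZMod (p^k)

theorem zmod_pow_eq_zero (h : k ≤ m) : ((p:ZMod (p^k)))^m = 0 := by
  have : ((p^m : ℕ) : ZMod (p^k)) = 0 := by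
    rw [ZMod.natCast_eq_zero_iff]
    exact pow_dvd_pow p h
  simpa using this

theorem zmod_not_dvd_pow (hp : p.Prime) {m m' : ℕ} (hmm : m < m') (hmk : m < k) :
    ¬ ((p:ZMod (p^k)))^m' ∣ ((p:ZMod (p^k)))^m := by
  haveI : NeZero (p^k) := ⟨pow_ne_zero _ hp.ne_zero⟩
  rintro ⟨c, hc⟩
  have hc' : ((p^m : ℕ) : ZMod (p^k)) = ((p^m' * c.val : ℕ) : ZMod (p^k)) := by
    push_cast
    rw [hc, ZMod.natCast_val, ZMod.cast_id]
  rw [ZMod.natCast_eq_natCast_iff] at hc'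
  have h2 : p^m ≡ p^m' * c.val [MOD p^(m+1)] :=
    Nat.ModEq.of_dvd (pow_dvd_pow p hmk) hc'
  have h3 : p^(m+1) ∣ p^m' * c.val := Dvd.dvd.mul_right (pow_dvd_pow p hmm) _
  have h4 : p^(m+1) ∣ p^m := (Nat.modEq_zero_iff_dvd.mp
    ((h2.trans (Nat.modEq_zero_iff_dvd.mpr h3))))
  have := Nat.le_of_dvd (pow_pos hp.pos m) h4
  exact absurd this (by
    have : p^m < p^(m+1) := Nat.pow_lt_pow_right hp.one_lt (Nat.lt_succ_self m)
    omega)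

theorem zmod_pow_antisymm (hp : p.Prime) {m m' : ℕ} (hm : m ≤ k) (hm' : m' ≤ k)
    (h1 : ((p:ZMod (p^k)))^m' ∣ ((p:ZMod (p^k)))^m)
    (h2 : ((p:ZMod (p^k)))^m ∣ ((p:ZMod (p^k)))^m') : m = m' := by
  by_contra hne
  rcases Nat.lt_or_ge m m' with h | h
  · exact zmod_not_dvd_pow hp h (lt_of_lt_of_le h hm') h1
  · exact zmod_not_dvd_pow hp (lt_of_le_of_ne h (Ne.symm hne)) (by omega) h2

end ZModLemmas


theorem zmod_unit_decomp {p k : ℕ} (hp : p.Prime) (g : ZMod (p^k)) :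
    ∃ m ≤ k, ∃ c : ZMod (p^k), IsUnit c ∧ g = (p:ZMod (p^k))^m * c := by
  haveI : NeZero (p^k) := ⟨pow_ne_zero _ hp.ne_zero⟩
  by_cases hg : g = 0
  · refine ⟨k, le_rfl, 1, isUnit_one, ?_⟩
    have : ((p^k : ℕ) : ZMod (p^k)) = 0 := ZMod.natCast_self _
    rw [hg]; push_cast at this ⊢; rw [this]; ring
  · have hval : g.val ≠ 0 := fun h => hg ((ZMod.val_eq_zero g).mp h)
    set w := g.val with hw
    set m := w.factorization p with hm
    have hdvd : p^m ∣ w := Nat.ordProj_dvd w p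
    have hcop : p.Coprime (w / p^m) := Nat.coprime_ordCompl hp hval
    have hmk : m < k := by
      have h1 : p^m ≤ w := Nat.le_of_dvd (Nat.pos_of_ne_zero hval) hdvd
      have h2 : w < p^k := ZMod.val_lt g
      exact (Nat.pow_lt_pow_iff_right hp.one_lt).mp (lt_of_le_of_lt h1 h2)
    refine ⟨m, le_of_lt hmk, ((w / p^m : ℕ) : ZMod (p^k)), ?_, ?_⟩
    · rw [ZMod.isUnit_iff_coprime]
      exact Nat.Coprime.pow_right _ (Nat.coprime_comm.mp hcop)
    · have : g = ((w : ℕ) : ZMod (p^k)) := by rw [hw, ZMod.natCast_val, ZMod.cast_id]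
      have h2 : w = p^m * (w/p^m) := (Nat.mul_div_cancel' hdvd).symm
      rw [this]; nth_rewrite 1 [h2]
      push_cast
      ring

section Master
variable {I Λ : Type*}

def EqOnly {X : Type*} (r : X → X → Prop) : Prop := ∀ x y, r x y → x = y

variable (p k t : ℕ) (fI : I → ℕ) (fΛ : Λ → ℕ)

def Pmat : Λ → I → ZMod (p^k) := fun l i => (p:ZMod (p^k))^t * (fΛ l) * (fI i)

def madd (x y : I × ZMod (p^k) × Λ) : I × ZMod (p^k) × Λ :=
  ⟨x.1, x.2.1 + Pmat p k t fI fΛ x.2.2 y.1 + y.2.1, y.2.2⟩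

def canon (m : ℕ) (RI : I → I → Prop) (RL : Λ → Λ → Prop) :
    (I × ZMod (p^k) × Λ) → (I × ZMod (p^k) × Λ) → Prop :=
  fun x y => RI x.1 y.1 ∧ RL x.2.2 y.2.2 ∧ (p:ZMod (p^k))^m ∣ (y.2.1 - x.2.1)

theorem canon_compat {m : ℕ} {RI : I → I → Prop} {RL : Λ → Λ → Prop}
    (hadm : m ≤ t ∨ (EqOnly RI ∧ EqOnly RL)) :
    ∀ x y z w, canon p k m RI RL x y → canon p k m RI RL z w →
      canon p k m RI RL (madd p k t fI fΛ x z) (madd p k t fI fΛ y w) := by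
  rintro ⟨i,g,l⟩ ⟨j,h,mu⟩ ⟨i',g',l'⟩ ⟨j',h',mu'⟩ ⟨hij, hlm, hd⟩ ⟨hij', hlm', hd'⟩
  refine ⟨hij, hlm', ?_⟩
  simp only [madd, Pmat]
  have key : (p:ZMod (p^k))^m ∣ ((p:ZMod (p^k))^t * (fΛ mu) * (fI j') -
      (p:ZMod (p^k))^t * (fΛ l) * (fI i')) := by
    rcases hadm with hmt | ⟨hI, hL⟩
    · have : (p:ZMod (p^k))^m ∣ (p:ZMod (p^k))^t := pow_dvd_pow _ hmt
      exact dvd_sub (Dvd.dvd.mul_right (Dvd.dvd.mul_right this _) _)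
        (Dvd.dvd.mul_right (Dvd.dvd.mul_right this _) _)
    · simp only at hlm hij'
      rw [hL _ _ hlm, hI _ _ hij']
      simp
  have : h + (p:ZMod (p^k))^t * (fΛ mu) * (fI j') + h' -
      (g + (p:ZMod (p^k))^t * (fΛ l) * (fI i') + g') =
      (h - g) + (h' - g') + ((p:ZMod (p^k))^t * (fΛ mu) * (fI j') -
      (p:ZMod (p^k))^t * (fΛ l) * (fI i')) := by ring
  rw [this]
  exact dvd_add (dvd_add hd hd') key

theorem canon_isDiagonal {m : ℕ} {RI : I → I → Prop} {RL : Λ → Λ → Prop}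
    (hRI : Reflexive RI) (hRL : Reflexive RL)
    (hadm : m ≤ t ∨ (EqOnly RI ∧ EqOnly RL)) :
    IsDiagonal (madd p k t fI fΛ) (canon p k m RI RL) :=
  ⟨fun s => ⟨hRI s.1, hRL s.2.2, by simp⟩, canon_compat p k t fI fΛ hadm⟩

theorem canon_isCongruence {m : ℕ} {RI : I → I → Prop} {RL : Λ → Λ → Prop}
    (hRI : Equivalence RI) (hRL : Equivalence RL)
    (hadm : m ≤ t ∨ (EqOnly RI ∧ EqOnly RL)) :
    IsCongruence (madd p k t fI fΛ) (canon p k m RI RL) := by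
  refine ⟨⟨fun s => ⟨hRI.refl s.1, hRL.refl s.2.2, by simp⟩, ?_, ?_⟩,
    canon_compat p k t fI fΛ hadm⟩
  · rintro ⟨i,g,l⟩ ⟨j,h,mu⟩ ⟨hij, hlm, hd⟩
    exact ⟨hRI.symm hij, hRL.symm hlm, by
      have : g - h = -(h - g) := by ring
      rw [this]; exact dvd_neg.mpr hd⟩
  · rintro ⟨i,g,l⟩ ⟨j,h,mu⟩ ⟨j',h',mu'⟩ ⟨hij, hlm, hd⟩ ⟨hij', hlm', hd'⟩
    exact ⟨hRI.trans hij hij', hRL.trans hlm hlm', by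
      have : h' - g = (h - g) + (h' - h) := by ring
      rw [this]; exact dvd_add hd hd'⟩

end Master


section U
theorem zmod_sub_unit {p k : ℕ} (hp : p.Prime) {s s' : ℕ} (hs : s < p) (hs' : s' < p)
    (hne : s ≠ s') : IsUnit ((s : ZMod (p^k)) - (s' : ZMod (p^k))) := by
  have key : ∀ u v : ℕ, v < u → u < p → IsUnit ((u : ZMod (p^k)) - (v : ZMod (p^k))) := by
    intro u v huv hup
    have hcast : ((u - v : ℕ) : ZMod (p^k)) = (u : ZMod (p^k)) - v :=
      Nat.cast_sub (le_of_lt huv)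
    rw [← hcast, ZMod.isUnit_iff_coprime]
    have h1 : ¬ p ∣ (u - v) := fun hdvd =>
      absurd (Nat.le_of_dvd (by omega) hdvd) (by omega)
    exact ((hp.coprime_iff_not_dvd.mpr h1).symm).pow_right k
  rcases Nat.lt_or_ge s s' with h | h
  · have := key s' s h hs'
    rw [show (s : ZMod (p^k)) - s' = -((s' : ZMod (p^k)) - s) by ring]
    exact this.neg
  · exact key s s' (by omega) hs
end U

section Classify
variable {I Λ : Type*} (p k t : ℕ) (fI : I → ℕ) (fΛ : Λ → ℕ)

theorem diag_classify (hp : p.Prime) (htk : t ≤ k)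
    (i0 i1 : I) (l0 l1 : Λ)
    (hfI : Function.Injective fI) (hfΛ : Function.Injective fΛ)
    (hfIp : ∀ i, fI i < p) (hfΛp : ∀ l, fΛ l < p)
    (hi0 : fI i0 = 0) (hi1 : fI i1 = 1) (hl0 : fΛ l0 = 0) (hl1 : fΛ l1 = 1)
    (ρ : (I × ZMod (p^k) × Λ) → (I × ZMod (p^k) × Λ) → Prop)
    (hρ : IsDiagonal (madd p k t fI fΛ) ρ) :
    ∃ m, m ≤ k ∧ ∃ RI : I → I → Prop, ∃ RL : Λ → Λ → Prop,
      Reflexive RI ∧ Reflexive RL ∧ (m ≤ t ∨ (EqOnly RI ∧ EqOnly RL)) ∧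
      ρ = canon p k m RI RL := by
  obtain ⟨hrefl, hcomp⟩ := hρ
  haveI : NeZero (p^k) := ⟨pow_ne_zero _ hp.ne_zero⟩
  have hPl0 : ∀ i, Pmat p k t fI fΛ l0 i = 0 := by
    intro i; simp [Pmat, hl0]
  have hPi0 : ∀ l, Pmat p k t fI fΛ l i0 = 0 := by
    intro l; simp [Pmat, hi0]
  have fix : ∀ {i j : I} {l mu : Λ} {g h : ZMod (p^k)} (g' h' : ZMod (p^k)),
      ρ (i,g,l) (j,h,mu) → g' = g → h' = h → ρ (i,g',l) (j,h',mu) := by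
    rintro i j l mu g h g' h' hx rfl rfl; exact hx
  have mulρ : ∀ {x y z w}, ρ x y → ρ z w →
      ρ (x.1, x.2.1 + Pmat p k t fI fΛ x.2.2 z.1 + z.2.1, z.2.2)
        (y.1, y.2.1 + Pmat p k t fI fΛ y.2.2 w.1 + w.2.1, w.2.2) :=
    fun h1 h2 => hcomp _ _ _ _ h1 h2
  set NN : Set (ZMod (p^k)) := {g | ρ (i0, 0, l0) (i0, g, l0)} with hNN
  have S1 : (0 : ZMod (p^k)) ∈ NN := hrefl _
  have S6 : ∀ c d : ZMod (p^k), d ∈ NN → ρ (i0, c, l0) (i0, c + d, l0) := by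
    intro c d hd
    exact fix _ _ (mulρ (hrefl (i0, c, l0)) hd) (by rw [hPl0]; ring) (by rw [hPl0]; ring)
  have S2 : ∀ g g' : ZMod (p^k), g ∈ NN → g' ∈ NN → g + g' ∈ NN := by
    intro g g' hg hg'
    exact fix _ _ (mulρ hg hg') (by rw [hPl0]; ring) (by rw [hPl0]; ring)
  have S3 : ∀ (n : ℕ) (g : ZMod (p^k)), g ∈ NN → (n : ZMod (p^k)) * g ∈ NN := by
    intro n g hg
    induction n with
    | zero => simpa using S1
    | succ n ih =>
      have e : ((n+1 : ℕ) : ZMod (p^k)) * g = (n : ZMod (p^k)) * g + g := by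
        push_cast; ring
      rw [e]; exact S2 _ _ ih hg
  have S4 : ∀ (c g : ZMod (p^k)), g ∈ NN → c * g ∈ NN := by
    intro c g hg
    have e : ((c.val : ℕ) : ZMod (p^k)) = c := by rw [ZMod.natCast_val, ZMod.cast_id]
    rw [← e]; exact S3 _ _ hg
  have S5 : ∀ g : ZMod (p^k), g ∈ NN → -g ∈ NN := by
    intro g hg
    have := S4 (-1) g hg
    simpa using this
  have S7 : ∀ i j g h l mu, ρ (i, g, l) (j, h, mu) → h - g ∈ NN := by
    intro i j g h l mu hx
    have h1 : ρ (i0, g, l) (i0, h, mu) :=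
      fix _ _ (mulρ (hrefl (i0, (0:ZMod (p^k)), l0)) hx)
        (by rw [hPl0]; ring) (by rw [hPl0]; ring)
    have h2 : ρ (i0, g, l0) (i0, h, l0) :=
      fix _ _ (mulρ h1 (hrefl (i0, (0:ZMod (p^k)), l0)))
        (by rw [hPi0]; ring) (by rw [hPi0]; ring)
    exact fix _ _ (mulρ (hrefl (i0, -g, l0)) h2)
      (by rw [hPl0]; ring) (by rw [hPl0]; ring)
  have S7' : ∀ i j g h l mu, ρ (i, g, l) (j, h, mu) → g - h ∈ NN := by
    intro i j g h l mu hx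
    have := S5 _ (S7 _ _ _ _ _ _ hx)
    rwa [neg_sub] at this
  have S8 : ∀ i j g h l mu, ρ (i, g, l) (j, h, mu) → ρ (i, 0, l0) (j, 0, l0) := by
    intro i j g h l mu hx
    have hgh : g - h ∈ NN := S7' _ _ _ _ _ _ hx
    have h1 : ρ (i, g, l0) (j, h, l0) :=
      fix _ _ (mulρ hx (hrefl (i0, (0:ZMod (p^k)), l0)))
        (by rw [hPi0]; ring) (by rw [hPi0]; ring)
    have W : ρ (i0, -g, l0) (i0, -h, l0) :=
      fix _ _ (S6 (-g) (g - h) hgh) rfl (by ring)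
    exact fix _ _ (mulρ h1 W) (by rw [hPl0]; ring) (by rw [hPl0]; ring)
  have S9 : ∀ i j g h l mu, ρ (i, g, l) (j, h, mu) → ρ (i0, 0, l) (i0, 0, mu) := by
    intro i j g h l mu hx
    have hgh : g - h ∈ NN := S7' _ _ _ _ _ _ hx
    have h1 : ρ (i0, g, l) (i0, h, mu) :=
      fix _ _ (mulρ (hrefl (i0, (0:ZMod (p^k)), l0)) hx)
        (by rw [hPl0]; ring) (by rw [hPl0]; ring)
    have W : ρ (i0, -g, l0) (i0, -h, l0) :=
      fix _ _ (S6 (-g) (g - h) hgh) rfl (by ring)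
    exact fix _ _ (mulρ W h1) (by rw [hPl0]; ring) (by rw [hPl0]; ring)
  have S10 : ∀ i j g h l mu, ρ (i, 0, l0) (j, 0, l0) → ρ (i0, 0, l) (i0, 0, mu) →
      h - g ∈ NN → ρ (i, g, l) (j, h, mu) := by
    intro i j g h l mu hRI hRL hN
    have B : ρ (i0, g, l0) (i0, h, l0) :=
      fix _ _ (S6 g (h - g) hN) rfl (by ring)
    have C : ρ (i0, g, l) (i0, h, mu) :=
      fix _ _ (mulρ B hRL) (by rw [hPl0]; ring) (by rw [hPl0]; ring)
    exact fix _ _ (mulρ hRI C) (by rw [hPl0]; ring) (by rw [hPl0]; ring)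
  have memk : ((p:ZMod (p^k)))^k ∈ NN := by
    have e : ((p:ZMod (p^k)))^k = 0 := zmod_pow_eq_zero le_rfl
    rw [e]; exact S1
  have hne : {m | ((p:ZMod (p^k)))^m ∈ NN}.Nonempty := ⟨k, memk⟩
  set jj := sInf {m | ((p:ZMod (p^k)))^m ∈ NN} with hjj
  have hjk : jj ≤ k := Nat.sInf_le memk
  have hpj : ((p:ZMod (p^k)))^jj ∈ NN := Nat.sInf_mem hne
  have NNeq : NN = {d | ((p:ZMod (p^k)))^jj ∣ d} := by
    ext d
    constructor
    · intro hd
      obtain ⟨m, hmk, c, hc, hdec⟩ := zmod_unit_decomp hp d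
      obtain ⟨cu, hcu⟩ := hc
      have hpm : ((p:ZMod (p^k)))^m ∈ NN := by
        have h1 := S4 (↑cu⁻¹) d hd
        have e : (↑cu⁻¹ : ZMod (p^k)) * d = ((p:ZMod (p^k)))^m := by
          rw [hdec, ← hcu, mul_comm (((p:ZMod (p^k)))^m) _, ← mul_assoc,
            Units.inv_mul, one_mul]
        rwa [e] at h1
      have hjm : jj ≤ m := Nat.sInf_le hpm
      rw [hdec]
      exact Dvd.dvd.mul_right (pow_dvd_pow _ hjm) _
    · rintro ⟨c, rfl⟩
      have := S4 c _ hpj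
      rwa [mul_comm] at this
  have adm : jj ≤ t ∨ (EqOnly (fun i j => ρ (i,0,l0) (j,0,l0)) ∧
      EqOnly (fun l mu => ρ (i0,0,l) (i0,0,mu))) := by
    by_cases hjt : jj ≤ t
    · exact Or.inl hjt
    · refine Or.inr ⟨?_, ?_⟩
      · intro i j hij
        by_contra hnij
        have h1 : ρ (i0, Pmat p k t fI fΛ l1 i, l0) (i0, Pmat p k t fI fΛ l1 j, l0) :=
          fix _ _ (mulρ (hrefl (i0, (0:ZMod (p^k)), l1)) hij) (by ring) (by ring)
        have h2 : Pmat p k t fI fΛ l1 j - Pmat p k t fI fΛ l1 i ∈ NN :=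
          S7 _ _ _ _ _ _ h1
        have e : Pmat p k t fI fΛ l1 j - Pmat p k t fI fΛ l1 i =
            ((p:ZMod (p^k)))^t * ((fI j : ZMod (p^k)) - (fI i : ZMod (p^k))) := by
          simp [Pmat, hl1]; ring
        rw [e] at h2
        have hu : IsUnit ((fI j : ZMod (p^k)) - (fI i : ZMod (p^k))) :=
          zmod_sub_unit hp (hfIp j) (hfIp i) (fun hh => hnij (hfI hh).symm)
        obtain ⟨cu, hcu⟩ := hu
        have hpt : ((p:ZMod (p^k)))^t ∈ NN := by
          have h3 := S4 (↑cu⁻¹) _ h2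
          have e2 : (↑cu⁻¹ : ZMod (p^k)) *
              (((p:ZMod (p^k)))^t * ((fI j : ZMod (p^k)) - (fI i : ZMod (p^k)))) =
              ((p:ZMod (p^k)))^t := by
            rw [← hcu, mul_comm (((p:ZMod (p^k)))^t) _, ← mul_assoc,
              Units.inv_mul, one_mul]
          rwa [e2] at h3
        exact hjt (Nat.sInf_le hpt)
      · intro l mu hlm
        by_contra hnlm
        have h1 : ρ (i0, Pmat p k t fI fΛ l i1, l0) (i0, Pmat p k t fI fΛ mu i1, l0) :=
          fix _ _ (mulρ hlm (hrefl (i1, (0:ZMod (p^k)), l0))) (by ring) (by ring)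
        have h2 : Pmat p k t fI fΛ mu i1 - Pmat p k t fI fΛ l i1 ∈ NN :=
          S7 _ _ _ _ _ _ h1
        have e : Pmat p k t fI fΛ mu i1 - Pmat p k t fI fΛ l i1 =
            ((p:ZMod (p^k)))^t * ((fΛ mu : ZMod (p^k)) - (fΛ l : ZMod (p^k))) := by
          simp [Pmat, hi1]; ring
        rw [e] at h2
        have hu : IsUnit ((fΛ mu : ZMod (p^k)) - (fΛ l : ZMod (p^k))) :=
          zmod_sub_unit hp (hfΛp mu) (hfΛp l) (fun hh => hnlm (hfΛ hh).symm)
        obtain ⟨cu, hcu⟩ := hu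
        have hpt : ((p:ZMod (p^k)))^t ∈ NN := by
          have h3 := S4 (↑cu⁻¹) _ h2
          have e2 : (↑cu⁻¹ : ZMod (p^k)) *
              (((p:ZMod (p^k)))^t * ((fΛ mu : ZMod (p^k)) - (fΛ l : ZMod (p^k)))) =
              ((p:ZMod (p^k)))^t := by
            rw [← hcu, mul_comm (((p:ZMod (p^k)))^t) _, ← mul_assoc,
              Units.inv_mul, one_mul]
          rwa [e2] at h3
        exact hjt (Nat.sInf_le hpt)
  refine ⟨jj, hjk, fun i j => ρ (i,0,l0) (j,0,l0), fun l mu => ρ (i0,0,l) (i0,0,mu),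
    fun i => hrefl _, fun l => hrefl _, adm, ?_⟩
  funext x y
  apply propext
  constructor
  · intro hxy
    obtain ⟨i, g, l⟩ := x
    obtain ⟨j, h, mu⟩ := y
    refine ⟨S8 _ _ _ _ _ _ hxy, S9 _ _ _ _ _ _ hxy, ?_⟩
    have := S7 _ _ _ _ _ _ hxy
    rwa [NNeq] at this
  · rintro ⟨h1, h2, h3⟩
    obtain ⟨i, g, l⟩ := x
    obtain ⟨j, h, mu⟩ := y
    refine S10 _ _ _ _ _ _ h1 h2 ?_
    rw [NNeq]
    exact h3
end Classify

section Inj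
variable {I Λ : Type*} {p k : ℕ}

theorem canon_iffI {m : ℕ} {RI : I → I → Prop} {RL : Λ → Λ → Prop}
    (hRL : Reflexive RL) (l0 : Λ) (i j : I) :
    canon p k m RI RL (i,0,l0) (j,0,l0) ↔ RI i j := by
  constructor
  · rintro ⟨h, _, _⟩; exact h
  · intro h; exact ⟨h, hRL l0, by simp⟩

theorem canon_iffL {m : ℕ} {RI : I → I → Prop} {RL : Λ → Λ → Prop}
    (hRI : Reflexive RI) (i0 : I) (l mu : Λ) :
    canon p k m RI RL (i0,0,l) (i0,0,mu) ↔ RL l mu := by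
  constructor
  · rintro ⟨_, h, _⟩; exact h
  · intro h; exact ⟨hRI i0, h, by simp⟩

theorem canon_iffD {m : ℕ} {RI : I → I → Prop} {RL : Λ → Λ → Prop}
    (hRI : Reflexive RI) (hRL : Reflexive RL) (i0 : I) (l0 : Λ) (d : ZMod (p^k)) :
    canon p k m RI RL (i0,0,l0) (i0,d,l0) ↔ (p:ZMod (p^k))^m ∣ d := by
  constructor
  · rintro ⟨_, _, h⟩; simpa using h
  · intro h; exact ⟨hRI i0, hRL l0, by simpa using h⟩

theorem canon_inj (hp : p.Prime) {m m' : ℕ} (hm : m ≤ k) (hm' : m' ≤ k)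
    (i0 : I) (l0 : Λ)
    {RI RI' : I → I → Prop} {RL RL' : Λ → Λ → Prop}
    (hRI : Reflexive RI) (hRL : Reflexive RL)
    (hRI' : Reflexive RI') (hRL' : Reflexive RL')
    (heq : canon p k m RI RL = canon p k m' RI' RL') :
    m = m' ∧ RI = RI' ∧ RL = RL' := by
  have hiff : ∀ x y, canon p k m RI RL x y ↔ canon p k m' RI' RL' x y := by
    intro x y; rw [heq]
  refine ⟨?_, ?_, ?_⟩
  · have h1 : (p:ZMod (p^k))^m' ∣ (p:ZMod (p^k))^m := by
      have := (hiff (i0,0,l0) (i0,(p:ZMod (p^k))^m,l0)).mp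
        ((canon_iffD hRI hRL i0 l0 _).mpr dvd_rfl)
      exact (canon_iffD hRI' hRL' i0 l0 _).mp this
    have h2 : (p:ZMod (p^k))^m ∣ (p:ZMod (p^k))^m' := by
      have := (hiff (i0,0,l0) (i0,(p:ZMod (p^k))^m',l0)).mpr
        ((canon_iffD hRI' hRL' i0 l0 _).mpr dvd_rfl)
      exact (canon_iffD hRI hRL i0 l0 _).mp this
    exact zmod_pow_antisymm hp hm hm' h1 h2
  · funext i j
    apply propext
    rw [iff_comm, ← canon_iffI (p:=p) (k:=k) (m:=m') (RI:=RI') (RL:=RL') hRL' l0 i j]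
    rw [← canon_iffI (p:=p) (k:=k) (m:=m) (RI:=RI) (RL:=RL) hRL l0 i j]
    exact (hiff _ _).symm
  · funext l mu
    apply propext
    rw [iff_comm, ← canon_iffL (p:=p) (k:=k) (m:=m') (RI:=RI') (RL:=RL') hRI' i0 l mu]
    rw [← canon_iffL (p:=p) (k:=k) (m:=m) (RI:=RI) (RL:=RL) hRI i0 l mu]
    exact (hiff _ _).symm
end Inj

section Bij
variable {I Λ : Type*} (p k t : ℕ) (fI : I → ℕ) (fΛ : Λ → ℕ)

def AdmD (m : ℕ) : Type _ := {r : (I → I → Prop) × (Λ → Λ → Prop) //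
  (Reflexive r.1 ∧ Reflexive r.2) ∧ ((m ≤ t) ∨ (EqOnly r.1 ∧ EqOnly r.2))}

def AdmC (m : ℕ) : Type _ := {r : (I → I → Prop) × (Λ → Λ → Prop) //
  (Equivalence r.1 ∧ Equivalence r.2) ∧ ((m ≤ t) ∨ (EqOnly r.1 ∧ EqOnly r.2))}

def FD : (Σ m : Fin (k+1), AdmD (I := I) (Λ := Λ) t m) →
    {ρ : (I × ZMod (p^k) × Λ) → (I × ZMod (p^k) × Λ) → Prop //
      IsDiagonal (madd p k t fI fΛ) ρ} :=
  fun x => ⟨canon p k x.1 x.2.1.1 x.2.1.2,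
    canon_isDiagonal p k t fI fΛ x.2.2.1.1 x.2.2.1.2 x.2.2.2⟩

def FC : (Σ m : Fin (k+1), AdmC (I := I) (Λ := Λ) t m) →
    {ρ : (I × ZMod (p^k) × Λ) → (I × ZMod (p^k) × Λ) → Prop //
      IsCongruence (madd p k t fI fΛ) ρ} :=
  fun x => ⟨canon p k x.1 x.2.1.1 x.2.1.2,
    canon_isCongruence p k t fI fΛ x.2.2.1.1 x.2.2.1.2 x.2.2.2⟩

theorem FD_bijective (hp : p.Prime) (htk : t ≤ k)
    (i0 i1 : I) (l0 l1 : Λ)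
    (hfI : Function.Injective fI) (hfΛ : Function.Injective fΛ)
    (hfIp : ∀ i, fI i < p) (hfΛp : ∀ l, fΛ l < p)
    (hi0 : fI i0 = 0) (hi1 : fI i1 = 1) (hl0 : fΛ l0 = 0) (hl1 : fΛ l1 = 1) :
    Function.Bijective (FD p k t fI fΛ) := by
  constructor
  · rintro ⟨⟨m, hm⟩, ⟨r1, r2⟩, ⟨⟨h1, h2⟩, hadm⟩⟩ ⟨⟨m', hm'⟩, ⟨r1', r2'⟩, ⟨⟨h1', h2'⟩, hadm'⟩⟩ heq
    simp only [FD, Subtype.mk.injEq] at heq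
    obtain ⟨hmm, hr1, hr2⟩ := canon_inj hp (Nat.lt_succ_iff.mp hm) (Nat.lt_succ_iff.mp hm')
      i0 l0 h1 h2 h1' h2' heq
    subst hmm hr1 hr2
    rfl
  · rintro ⟨ρ, hρ⟩
    obtain ⟨m, hmk, RI, RL, hRI, hRL, hadm, hcanon⟩ :=
      diag_classify p k t fI fΛ hp htk i0 i1 l0 l1 hfI hfΛ hfIp hfΛp hi0 hi1 hl0 hl1 ρ hρ
    exact ⟨⟨⟨m, Nat.lt_succ_of_le hmk⟩, ⟨RI, RL⟩, ⟨⟨hRI, hRL⟩, hadm⟩⟩,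
      Subtype.ext hcanon.symm⟩

theorem FC_bijective (hp : p.Prime) (htk : t ≤ k)
    (i0 i1 : I) (l0 l1 : Λ)
    (hfI : Function.Injective fI) (hfΛ : Function.Injective fΛ)
    (hfIp : ∀ i, fI i < p) (hfΛp : ∀ l, fΛ l < p)
    (hi0 : fI i0 = 0) (hi1 : fI i1 = 1) (hl0 : fΛ l0 = 0) (hl1 : fΛ l1 = 1) :
    Function.Bijective (FC p k t fI fΛ) := by
  constructor
  · rintro ⟨⟨m, hm⟩, ⟨r1, r2⟩, ⟨⟨h1, h2⟩, hadm⟩⟩ ⟨⟨m', hm'⟩, ⟨r1', r2'⟩, ⟨⟨h1', h2'⟩, hadm'⟩⟩ heq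
    simp only [FC, Subtype.mk.injEq] at heq
    obtain ⟨hmm, hr1, hr2⟩ := canon_inj hp (Nat.lt_succ_iff.mp hm) (Nat.lt_succ_iff.mp hm')
      i0 l0 (fun i => h1.refl i) (fun l => h2.refl l) (fun i => h1'.refl i)
      (fun l => h2'.refl l) heq
    subst hmm hr1 hr2
    rfl
  · rintro ⟨ρ, hρ⟩
    have hdiag : IsDiagonal (madd p k t fI fΛ) ρ := ⟨fun s => hρ.1.refl s, hρ.2⟩
    obtain ⟨m, hmk, RI, RL, hRI, hRL, hadm, hcanon⟩ :=
      diag_classify p k t fI fΛ hp htk i0 i1 l0 l1 hfI hfΛ hfIp hfΛp hi0 hi1 hl0 hl1 ρ hdiag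
    have hcan : ∀ x y, ρ x y ↔ canon p k m RI RL x y := by
      intro x y; rw [hcanon]
    have hRIe : Equivalence RI := by
      refine ⟨hRI, ?_, ?_⟩
      · intro i j hij
        have := hρ.1.symm ((hcan (i,0,l0) (j,0,l0)).mpr
          ((canon_iffI (RI := RI) (RL := RL) hRL l0 i j).mpr hij))
        exact (canon_iffI (RI := RI) (RL := RL) hRL l0 j i).mp ((hcan _ _).mp this)
      · intro i j jj hij hjj
        have t1 := (hcan (i,0,l0) (j,0,l0)).mpr
          ((canon_iffI (RI := RI) (RL := RL) hRL l0 i j).mpr hij)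
        have t2 := (hcan (j,0,l0) (jj,0,l0)).mpr
          ((canon_iffI (RI := RI) (RL := RL) hRL l0 j jj).mpr hjj)
        exact (canon_iffI (RI := RI) (RL := RL) hRL l0 i jj).mp
          ((hcan _ _).mp (hρ.1.trans t1 t2))
    have hRLe : Equivalence RL := by
      refine ⟨hRL, ?_, ?_⟩
      · intro l mu hlm
        have := hρ.1.symm ((hcan (i0,0,l) (i0,0,mu)).mpr
          ((canon_iffL (RI := RI) (RL := RL) hRI i0 l mu).mpr hlm))
        exact (canon_iffL (RI := RI) (RL := RL) hRI i0 mu l).mp ((hcan _ _).mp this)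
      · intro l mu nu hlm hmn
        have t1 := (hcan (i0,0,l) (i0,0,mu)).mpr
          ((canon_iffL (RI := RI) (RL := RL) hRI i0 l mu).mpr hlm)
        have t2 := (hcan (i0,0,mu) (i0,0,nu)).mpr
          ((canon_iffL (RI := RI) (RL := RL) hRI i0 mu nu).mpr hmn)
        exact (canon_iffL (RI := RI) (RL := RL) hRI i0 l nu).mp
          ((hcan _ _).mp (hρ.1.trans t1 t2))
    exact ⟨⟨⟨m, Nat.lt_succ_of_le hmk⟩, ⟨RI, RL⟩, ⟨⟨hRIe, hRLe⟩, hadm⟩⟩,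
      Subtype.ext hcanon.symm⟩
end Bij

section Cards
variable {I Λ : Type*} [Fintype I] [Fintype Λ]

def reflEquiv : {r : I → I → Prop // Reflexive r} ≃ ({q : I × I // q.1 ≠ q.2} → Prop) where
  toFun r q := r.1 q.1.1 q.1.2
  invFun f := ⟨fun i j => i = j ∨ ∃ h : i ≠ j, f ⟨(i,j), h⟩, fun i => Or.inl rfl⟩
  left_inv := by
    rintro ⟨r, hr⟩
    apply Subtype.ext
    funext i j
    apply propext
    constructor
    · rintro (rfl | ⟨h, hf⟩)
      · exact hr i
      · exact hf
    · intro h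
      by_cases hij : i = j
      · exact Or.inl hij
      · exact Or.inr ⟨hij, h⟩
  right_inv := by
    intro f
    funext q
    obtain ⟨⟨i, j⟩, hq⟩ := q
    apply propext
    constructor
    · rintro (h | ⟨h, hf⟩)
      · exact absurd h hq
      · exact hf
    · intro h
      exact Or.inr ⟨hq, h⟩

theorem card_ne_pairs :
    Nat.card {q : I × I // q.1 ≠ q.2} = Fintype.card I ^ 2 - Fintype.card I := by
  classical
  have e : {q : I × I // q.1 = q.2} ≃ I := by
    refine ⟨fun q => q.1.1, fun i => ⟨(i,i), rfl⟩, ?_, fun i => rfl⟩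
    rintro ⟨⟨i, j⟩, (h : i = j)⟩
    subst h
    rfl
  rw [Nat.card_eq_fintype_card, Fintype.card_subtype_compl (p := fun q : I × I => q.1 = q.2),
    Fintype.card_congr e, Fintype.card_prod, pow_two]

theorem card_refl :
    Nat.card {r : I → I → Prop // Reflexive r} =
      2 ^ (Fintype.card I ^ 2 - Fintype.card I) := by
  rw [Nat.card_congr reflEquiv, Nat.card_fun, card_ne_pairs,
    Nat.card_eq_fintype_card, Fintype.card_prop]

def setoidEquivSubtype : Setoid I ≃ {r : I → I → Prop // Equivalence r} where
  toFun s := ⟨s.r, s.iseqv⟩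
  invFun r := ⟨r.1, r.2⟩
  left_inv s := rfl
  right_inv r := rfl

def setoidCongr {J : Type*} (e : I ≃ J) : Setoid I ≃ Setoid J where
  toFun s := ⟨fun x y => s.r (e.symm x) (e.symm y),
    ⟨fun x => s.iseqv.refl _, fun h => s.iseqv.symm h, fun h1 h2 => s.iseqv.trans h1 h2⟩⟩
  invFun s := ⟨fun x y => s.r (e x) (e y),
    ⟨fun x => s.iseqv.refl _, fun h => s.iseqv.symm h, fun h1 h2 => s.iseqv.trans h1 h2⟩⟩
  left_inv s := by
    apply Setoid.ext
    intro x y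
    show s.r (e.symm (e x)) (e.symm (e y)) ↔ s.r x y
    simp
  right_inv s := by
    apply Setoid.ext
    intro x y
    show s.r (e (e.symm x)) (e (e.symm y)) ↔ s.r x y
    rw [Equiv.apply_symm_apply, Equiv.apply_symm_apply]

theorem card_equivrel :
    Nat.card {r : I → I → Prop // Equivalence r} =
      Nat.card (Setoid (Fin (Fintype.card I))) := by
  rw [← Nat.card_congr (setoidEquivSubtype (I := I))]
  exact Nat.card_congr (setoidCongr (Fintype.equivFin I))

end Cards

section Cards2
variable {I Λ : Type*} [Fintype I] [Fintype Λ]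

instance admD_finite (t m : ℕ) : Finite (AdmD (I := I) (Λ := Λ) t m) := by
  unfold AdmD
  infer_instance

instance admC_finite (t m : ℕ) : Finite (AdmC (I := I) (Λ := Λ) t m) := by
  unfold AdmC
  infer_instance

theorem card_admD_le {t m : ℕ} (h : m ≤ t) :
    Nat.card (AdmD (I := I) (Λ := Λ) t m) =
      2 ^ (Fintype.card I ^ 2 - Fintype.card I) *
      2 ^ (Fintype.card Λ ^ 2 - Fintype.card Λ) := by
  have e1 : AdmD (I := I) (Λ := Λ) t m ≃
      {r : (I → I → Prop) × (Λ → Λ → Prop) // Reflexive r.1 ∧ Reflexive r.2} :=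
    Equiv.subtypeEquivRight (fun r => by
      constructor
      · rintro ⟨h1, _⟩; exact h1
      · intro h1; exact ⟨h1, Or.inl h⟩)
  rw [Nat.card_congr (e1.trans (Equiv.subtypeProdEquivProd)), Nat.card_prod,
    card_refl, card_refl]

theorem card_admC_le {t m : ℕ} (h : m ≤ t) :
    Nat.card (AdmC (I := I) (Λ := Λ) t m) =
      Nat.card (Setoid (Fin (Fintype.card I))) *
      Nat.card (Setoid (Fin (Fintype.card Λ))) := by
  have e1 : AdmC (I := I) (Λ := Λ) t m ≃
      {r : (I → I → Prop) × (Λ → Λ → Prop) // Equivalence r.1 ∧ Equivalence r.2} :=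
    Equiv.subtypeEquivRight (fun r => by
      constructor
      · rintro ⟨h1, _⟩; exact h1
      · intro h1; exact ⟨h1, Or.inl h⟩)
  rw [Nat.card_congr (e1.trans (Equiv.subtypeProdEquivProd)), Nat.card_prod,
    card_equivrel, card_equivrel]

theorem eq_of_refl_eqOnly {X : Type*} {r : X → X → Prop} (h1 : Reflexive r)
    (h2 : EqOnly r) : r = (· = ·) := by
  funext x y
  apply propext
  constructor
  · exact h2 x y
  · rintro rfl; exact h1 x

theorem card_admD_gt {t m : ℕ} (h : ¬ m ≤ t) :
    Nat.card (AdmD (I := I) (Λ := Λ) t m) = 1 := by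
  haveI : Nonempty (AdmD (I := I) (Λ := Λ) t m) :=
    ⟨⟨((· = ·), (· = ·)), ⟨fun i => rfl, fun l => rfl⟩,
      Or.inr ⟨fun x y hh => hh, fun x y hh => hh⟩⟩⟩
  haveI : Subsingleton (AdmD (I := I) (Λ := Λ) t m) := by
    constructor
    rintro ⟨⟨r1, r2⟩, ⟨hr1, hr2⟩, hadm⟩ ⟨⟨r1', r2'⟩, ⟨hr1', hr2'⟩, hadm'⟩
    rcases hadm with hmt | ⟨e1, e2⟩
    · exact absurd hmt h
    rcases hadm' with hmt | ⟨e1', e2'⟩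
    · exact absurd hmt h
    apply Subtype.ext
    simp only [Prod.mk.injEq]
    exact ⟨(eq_of_refl_eqOnly hr1 e1).trans (eq_of_refl_eqOnly hr1' e1').symm,
      (eq_of_refl_eqOnly hr2 e2).trans (eq_of_refl_eqOnly hr2' e2').symm⟩
  exact Nat.card_unique

theorem card_admC_gt {t m : ℕ} (h : ¬ m ≤ t) :
    Nat.card (AdmC (I := I) (Λ := Λ) t m) = 1 := by
  haveI : Nonempty (AdmC (I := I) (Λ := Λ) t m) :=
    ⟨⟨((· = ·), (· = ·)), ⟨eq_equivalence, eq_equivalence⟩,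
      Or.inr ⟨fun x y hh => hh, fun x y hh => hh⟩⟩⟩
  haveI : Subsingleton (AdmC (I := I) (Λ := Λ) t m) := by
    constructor
    rintro ⟨⟨r1, r2⟩, ⟨hr1, hr2⟩, hadm⟩ ⟨⟨r1', r2'⟩, ⟨hr1', hr2'⟩, hadm'⟩
    rcases hadm with hmt | ⟨e1, e2⟩
    · exact absurd hmt h
    rcases hadm' with hmt | ⟨e1', e2'⟩
    · exact absurd hmt h
    apply Subtype.ext
    simp only [Prod.mk.injEq]
    exact ⟨(eq_of_refl_eqOnly (fun x => hr1.refl x) e1).trans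
        (eq_of_refl_eqOnly (fun x => hr1'.refl x) e1').symm,
      (eq_of_refl_eqOnly (fun x => hr2.refl x) e2).trans
        (eq_of_refl_eqOnly (fun x => hr2'.refl x) e2').symm⟩
  exact Nat.card_unique

theorem sum_ite_levels (k t L : ℕ) (htk : t ≤ k) :
    ∑ m ∈ Finset.range (k+1), (if m ≤ t then L else 1) = (t+1) * L + (k - t) := by
  rw [Finset.range_eq_Ico, ← Finset.sum_Ico_consecutive _ (Nat.zero_le (t+1)) (by omega)]
  have h1 : ∑ m ∈ Finset.Ico 0 (t+1), (if m ≤ t then L else 1) = (t+1) * L := by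
    have hc : ∀ m ∈ Finset.Ico 0 (t+1), (if m ≤ t then L else 1) = L := by
      intro m hm
      simp only [Finset.mem_Ico] at hm
      rw [if_pos (by omega)]
    rw [Finset.sum_congr rfl hc, Finset.sum_const, Nat.card_Ico]
    simp [mul_comm]
  have h2 : ∑ m ∈ Finset.Ico (t+1) (k+1), (if m ≤ t then L else 1) = k - t := by
    have hc : ∀ m ∈ Finset.Ico (t+1) (k+1), (if m ≤ t then L else 1) = 1 := by
      intro m hm
      simp only [Finset.mem_Ico] at hm
      rw [if_neg (by omega)]
    rw [Finset.sum_congr rfl hc, Finset.sum_const, Nat.card_Ico]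
    simp
  rw [h1, h2]

theorem card_sigma_admD (k t : ℕ) (htk : t ≤ k) :
    Nat.card (Σ m : Fin (k+1), AdmD (I := I) (Λ := Λ) t m) =
      (t+1) * (2 ^ (Fintype.card I ^ 2 - Fintype.card I) *
        2 ^ (Fintype.card Λ ^ 2 - Fintype.card Λ)) + (k - t) := by
  classical
  haveI : ∀ m : Fin (k+1), Fintype (AdmD (I := I) (Λ := Λ) t m) :=
    fun m => Fintype.ofFinite _
  rw [Nat.card_eq_fintype_card, Fintype.card_sigma]
  have he : ∀ m : Fin (k+1), Fintype.card (AdmD (I := I) (Λ := Λ) t m) =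
      (if (m : ℕ) ≤ t then (2 ^ (Fintype.card I ^ 2 - Fintype.card I) *
        2 ^ (Fintype.card Λ ^ 2 - Fintype.card Λ)) else 1) := by
    intro m
    rw [← Nat.card_eq_fintype_card]
    by_cases h : (m : ℕ) ≤ t
    · rw [card_admD_le h, if_pos h]
    · rw [card_admD_gt h, if_neg h]
  rw [Finset.sum_congr rfl (fun m _ => he m),
    Fin.sum_univ_eq_sum_range (fun m => if m ≤ t then _ else 1) (k+1),
    sum_ite_levels k t _ htk]

theorem card_sigma_admC (k t : ℕ) (htk : t ≤ k) :
    Nat.card (Σ m : Fin (k+1), AdmC (I := I) (Λ := Λ) t m) =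
      (t+1) * (Nat.card (Setoid (Fin (Fintype.card I))) *
        Nat.card (Setoid (Fin (Fintype.card Λ)))) + (k - t) := by
  classical
  haveI : ∀ m : Fin (k+1), Fintype (AdmC (I := I) (Λ := Λ) t m) :=
    fun m => Fintype.ofFinite _
  rw [Nat.card_eq_fintype_card, Fintype.card_sigma]
  have he : ∀ m : Fin (k+1), Fintype.card (AdmC (I := I) (Λ := Λ) t m) =
      (if (m : ℕ) ≤ t then (Nat.card (Setoid (Fin (Fintype.card I))) *
        Nat.card (Setoid (Fin (Fintype.card Λ)))) else 1) := by
    intro m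
    rw [← Nat.card_eq_fintype_card]
    by_cases h : (m : ℕ) ≤ t
    · rw [card_admC_le h, if_pos h]
    · rw [card_admC_gt h, if_neg h]
  rw [Finset.sum_congr rfl (fun m _ => he m),
    Fin.sum_univ_eq_sum_range (fun m => if m ≤ t then _ else 1) (k+1),
    sum_ite_levels k t _ htk]

end Cards2

section Transport
variable {S S' : Type*}

theorem isDiagonal_transport (mul : S → S → S) (mul' : S' → S' → S') (e : S ≃ S')
    (h : ∀ x y, e (mul x y) = mul' (e x) (e y)) (ρ : S → S → Prop)
    (hρ : IsDiagonal mul ρ) :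
    IsDiagonal mul' (fun x y => ρ (e.symm x) (e.symm y)) := by
  constructor
  · intro s; exact hρ.1 _
  · intro x y z w hxy hzw
    have e1 : e.symm (mul' x z) = mul (e.symm x) (e.symm z) := by
      rw [Equiv.symm_apply_eq, h, Equiv.apply_symm_apply, Equiv.apply_symm_apply]
    have e2 : e.symm (mul' y w) = mul (e.symm y) (e.symm w) := by
      rw [Equiv.symm_apply_eq, h, Equiv.apply_symm_apply, Equiv.apply_symm_apply]
    simp only [e1, e2]
    exact hρ.2 _ _ _ _ hxy hzw

theorem isCongruence_transport (mul : S → S → S) (mul' : S' → S' → S') (e : S ≃ S')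
    (h : ∀ x y, e (mul x y) = mul' (e x) (e y)) (ρ : S → S → Prop)
    (hρ : IsCongruence mul ρ) :
    IsCongruence mul' (fun x y => ρ (e.symm x) (e.symm y)) := by
  constructor
  · exact ⟨fun s => hρ.1.refl _, fun hab => hρ.1.symm hab, fun h1 h2 => hρ.1.trans h1 h2⟩
  · exact (isDiagonal_transport mul mul' e h ρ ⟨fun s => hρ.1.refl s, hρ.2⟩).2

theorem h_symm (mul : S → S → S) (mul' : S' → S' → S') (e : S ≃ S')
    (h : ∀ x y, e (mul x y) = mul' (e x) (e y)) :
    ∀ x y, e.symm (mul' x y) = mul (e.symm x) (e.symm y) := by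
  intro x y
  rw [Equiv.symm_apply_eq, h, Equiv.apply_symm_apply, Equiv.apply_symm_apply]

def diagEquivTransport (mul : S → S → S) (mul' : S' → S' → S') (e : S ≃ S')
    (h : ∀ x y, e (mul x y) = mul' (e x) (e y)) :
    {ρ : S → S → Prop // IsDiagonal mul ρ} ≃ {ρ' : S' → S' → Prop // IsDiagonal mul' ρ'} where
  toFun r := ⟨fun x y => r.1 (e.symm x) (e.symm y),
    isDiagonal_transport mul mul' e h r.1 r.2⟩
  invFun r := ⟨fun x y => r.1 (e x) (e y), by
    have := isDiagonal_transport mul' mul e.symm (h_symm mul mul' e h) r.1 r.2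
    simpa using this⟩
  left_inv r := by apply Subtype.ext; funext x y; simp
  right_inv r := by apply Subtype.ext; funext x y; simp

def congEquivTransport (mul : S → S → S) (mul' : S' → S' → S') (e : S ≃ S')
    (h : ∀ x y, e (mul x y) = mul' (e x) (e y)) :
    {ρ : S → S → Prop // IsCongruence mul ρ} ≃
      {ρ' : S' → S' → Prop // IsCongruence mul' ρ'} where
  toFun r := ⟨fun x y => r.1 (e.symm x) (e.symm y),
    isCongruence_transport mul mul' e h r.1 r.2⟩
  invFun r := ⟨fun x y => r.1 (e x) (e y), by
    have := isCongruence_transport mul' mul e.symm (h_symm mul mul' e h) r.1 r.2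
    simpa using this⟩
  left_inv r := by apply Subtype.ext; funext x y; simp
  right_inv r := by apply Subtype.ext; funext x y; simp

theorem chi_congr (mul : S → S → S) (mul' : S' → S' → S') (e : S ≃ S')
    (h : ∀ x y, e (mul x y) = mul' (e x) (e y)) : chi mul = chi mul' := by
  unfold chi
  rw [Nat.card_congr (congEquivTransport mul mul' e h),
    Nat.card_congr (diagEquivTransport mul mul' e h)]

end Transport

section Bell

instance setoid_finite {X : Type*} [Finite X] : Finite (Setoid X) :=
  Finite.of_equiv _ (setoidEquivSubtype (I := X)).symm

theorem bell_eq_card {X : Type*} [Fintype X] :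
    Nat.card {r : X → X → Prop // Equivalence r} = bell (Fintype.card X) := by
  rw [card_equivrel]; rfl

theorem bell_pos (m : ℕ) : 0 < bell m := by
  have : Nonempty (Setoid (Fin m)) := ⟨⟨(· = ·), eq_equivalence⟩⟩
  exact Nat.card_pos

theorem bell_lt (m : ℕ) (hm : 2 ≤ m) : bell m < 2 ^ (m^2 - m) := by
  classical
  set x0 : Fin m := ⟨0, by omega⟩ with hx0
  set x1 : Fin m := ⟨1, by omega⟩ with hx1
  have h0 : x0 ≠ x1 := by
    intro h
    have := congrArg Fin.val h
    simp [hx0, hx1] at this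
  set r0 : Fin m → Fin m → Prop := fun x y => x = y ∨ (x = x0 ∧ y = x1) with hr0
  have hrefl : Reflexive r0 := fun x => Or.inl rfl
  have hnotequiv : ¬ Equivalence r0 := by
    intro he
    have h01 : r0 x0 x1 := Or.inr ⟨rfl, rfl⟩
    have h10 : r0 x1 x0 := he.symm h01
    rcases h10 with h | ⟨h1, h2⟩
    · exact h0 h.symm
    · exact h0 h1.symm
  have hinj : Function.Injective
      (fun r : {r : Fin m → Fin m → Prop // Equivalence r} =>
        (⟨r.1, fun x => r.2.refl x⟩ : {r : Fin m → Fin m → Prop // Reflexive r})) := by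
    rintro ⟨r, hr⟩ ⟨r', hr'⟩ h
    simp only [Subtype.mk.injEq] at h
    exact Subtype.ext (show r = r' from congrArg Subtype.val h)
  have hnotmem : (⟨r0, hrefl⟩ : {r : Fin m → Fin m → Prop // Reflexive r}) ∉
      Set.range (fun r : {r : Fin m → Fin m → Prop // Equivalence r} =>
        (⟨r.1, fun x => r.2.refl x⟩ : {r : Fin m → Fin m → Prop // Reflexive r})) := by
    rintro ⟨⟨r, hr⟩, heq⟩
    simp only [Subtype.mk.injEq] at heq
    exact hnotequiv ((show r = r0 from congrArg Subtype.val heq) ▸ hr)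
  haveI : Fintype {r : Fin m → Fin m → Prop // Equivalence r} := Fintype.ofFinite _
  haveI : Fintype {r : Fin m → Fin m → Prop // Reflexive r} := Fintype.ofFinite _
  have hlt := Fintype.card_lt_of_injective_of_notMem _ hinj hnotmem
  have e1 : bell m = Fintype.card {r : Fin m → Fin m → Prop // Equivalence r} := by
    rw [← Nat.card_eq_fintype_card, bell_eq_card, Fintype.card_fin]
  have e2 : Fintype.card {r : Fin m → Fin m → Prop // Reflexive r} = 2 ^ (m^2 - m) := by
    rw [← Nat.card_eq_fintype_card, card_refl, Fintype.card_fin]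
  omega

end Bell

theorem stmt16' {I Λ : Type*} [Fintype I] [Fintype Λ] (a b : ℕ)
    (ha : Fintype.card I = a) (hb : Fintype.card Λ = b)
    (ha1 : 1 < a) (hb1 : 1 < b) (α : ℚ)
    (hα1 : ((bell a : ℚ) * bell b) / (2 ^ (a ^ 2 - a) * 2 ^ (b ^ 2 - b)) ≤ α)
    (hα2 : α < 1) :
    ∃ (G : Type) (instG : Group G), Finite G ∧
      ∃ P : Λ → I → G, chi (@rmul G I Λ instG P) = α := by
  classical
  set K := bell a * bell b with hK
  set L := 2^(a^2-a) * 2^(b^2-b) with hL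
  have hK0 : 0 < K := Nat.mul_pos (bell_pos a) (bell_pos b)
  have hL0 : 0 < L := by positivity
  have hKL : K < L := by
    have h1 := bell_lt a ha1
    have h2 := bell_lt b hb1
    exact Nat.mul_lt_mul_of_lt_of_lt h1 h2
  have hα0 : 0 < α := by
    refine lt_of_lt_of_le ?_ hα1
    apply div_pos
    · have : (0:ℚ) < (K:ℚ) := by exact_mod_cast hK0
      rw [hK] at this; push_cast at this; exact this
    · positivity
  set u := α.num.toNat with hu
  set v := α.den with hv
  have hv0 : 0 < v := α.pos
  have hnum0 : 0 < α.num := Rat.num_pos.mpr hα0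
  have hu0 : 0 < u := by omega
  have hucast : ((u:ℚ)) = (α.num : ℚ) := by
    have h := Int.toNat_of_nonneg hnum0.le
    rw [hu]; exact_mod_cast h
  have hαuv : α = (u:ℚ)/v := by
    rw [hucast, hv, Rat.num_div_den α]
  have huv : u < v := by
    have hd : (0:ℚ) < (v:ℚ) := by exact_mod_cast hv0
    have : (u:ℚ) < (v:ℚ) := by
      rw [hαuv, div_lt_one hd] at hα2
      exact hα2
    exact_mod_cast this
  have hKvLu : K * v ≤ L * u := by
    rw [hαuv, div_le_div_iff₀ (by positivity) (by exact_mod_cast hv0)] at hα1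
    have : ((K:ℚ)) * v ≤ (L:ℚ) * u := by
      rw [hK, hL]; push_cast; push_cast at hα1; linarith
    exact_mod_cast this
  set ee := L*u - K*v with hee
  set t := v - u - 1 with hT
  set k := t + ee with hk
  have htk : t ≤ k := Nat.le_add_right _ _
  have ht1 : t + 1 = v - u := by omega
  have hkt : k - t = ee := by omega
  obtain ⟨p, hpge, hp⟩ := Nat.exists_infinite_primes (max a b)
  haveI : NeZero (p^k) := ⟨pow_ne_zero _ hp.pos.ne'⟩
  set eI := Fintype.equivFin I with heI
  set eL := Fintype.equivFin Λ with heL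
  set fI : I → ℕ := fun i => (eI i : ℕ) with hfIdef
  set fΛ : Λ → ℕ := fun l => (eL l : ℕ) with hfΛdef
  have hfI : Function.Injective fI := fun i j h => eI.injective (Fin.ext h)
  have hfΛ : Function.Injective fΛ := fun i j h => eL.injective (Fin.ext h)
  have hfIp : ∀ i, fI i < p := by
    intro i
    have h1 : (eI i : ℕ) < a := by rw [← ha]; exact (eI i).2
    have hap : a ≤ p := le_trans (le_max_left a b) hpge
    have h2 : fI i = (eI i : ℕ) := rfl
    omega
  have hfΛp : ∀ l, fΛ l < p := by
    intro l
    have h1 : (eL l : ℕ) < b := by rw [← hb]; exact (eL l).2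
    have hbp : b ≤ p := le_trans (le_max_right a b) hpge
    have h2 : fΛ l = (eL l : ℕ) := rfl
    omega
  have hcardI : 0 < Fintype.card I := by omega
  have hcardI1 : 1 < Fintype.card I := by omega
  have hcardL : 0 < Fintype.card Λ := by omega
  have hcardL1 : 1 < Fintype.card Λ := by omega
  set i0 : I := eI.symm ⟨0, hcardI⟩ with hi0def
  set i1 : I := eI.symm ⟨1, hcardI1⟩ with hi1def
  set l0 : Λ := eL.symm ⟨0, hcardL⟩ with hl0def
  set l1 : Λ := eL.symm ⟨1, hcardL1⟩ with hl1def
  have hi0 : fI i0 = 0 := by simp [hfIdef, hi0def]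
  have hi1 : fI i1 = 1 := by simp [hfIdef, hi1def]
  have hl0 : fΛ l0 = 0 := by simp [hfΛdef, hl0def]
  have hl1 : fΛ l1 = 1 := by simp [hfΛdef, hl1def]
  refine ⟨Multiplicative (ZMod (p^k)), inferInstance,
    Finite.of_equiv _ Multiplicative.ofAdd, ?_⟩
  refine ⟨fun l i => Multiplicative.ofAdd (Pmat p k t fI fΛ l i), ?_⟩
  have hchi : chi (rmul (fun l i => Multiplicative.ofAdd (Pmat p k t fI fΛ l i)))
      = chi (madd p k t fI fΛ) := by
    refine chi_congr _ _
      ((Equiv.refl I).prodCongr ((Multiplicative.toAdd).prodCongr (Equiv.refl Λ))) ?_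
    intro x y
    rfl
  rw [hchi]
  have hC : Nat.card {ρ : (I × ZMod (p^k) × Λ) → (I × ZMod (p^k) × Λ) → Prop //
      IsCongruence (madd p k t fI fΛ) ρ} = (t+1) * K + (k-t) := by
    rw [← Nat.card_eq_of_bijective (FC p k t fI fΛ)
      (FC_bijective p k t fI fΛ hp htk i0 i1 l0 l1 hfI hfΛ hfIp hfΛp hi0 hi1 hl0 hl1)]
    rw [card_sigma_admC k t htk, ha, hb]
    rfl
  have hD : Nat.card {ρ : (I × ZMod (p^k) × Λ) → (I × ZMod (p^k) × Λ) → Prop //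
      IsDiagonal (madd p k t fI fΛ) ρ} = (t+1) * L + (k-t) := by
    rw [← Nat.card_eq_of_bijective (FD p k t fI fΛ)
      (FD_bijective p k t fI fΛ hp htk i0 i1 l0 l1 hfI hfΛ hfIp hfΛp hi0 hi1 hl0 hl1)]
    rw [card_sigma_admD k t htk, ha, hb]
  unfold chi
  rw [hC, hD, ht1, hkt]
  have hc1 : (((v - u) * K + ee : ℕ) : ℚ) = (u : ℚ) * ((L:ℚ) - (K:ℚ)) := by
    push_cast [Nat.cast_sub huv.le, hee, Nat.cast_sub hKvLu]
    ring
  have hc2 : (((v - u) * L + ee : ℕ) : ℚ) = (v : ℚ) * ((L:ℚ) - (K:ℚ)) := by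
    push_cast [Nat.cast_sub huv.le, hee, Nat.cast_sub hKvLu]
    ring
  rw [hc1, hc2, mul_div_mul_right _ _ (by
    have : (K:ℚ) < (L:ℚ) := by exact_mod_cast hKL
    intro hzero
    have : (L:ℚ) = K := by linarith [sub_eq_zero.mp hzero]
    linarith)]
  exact hαuv.symm

/-- For finite index sets with `|I| = a > 1`, `|Λ| = b > 1` and any rational `α` with
`B(a)B(b)/(2^(a²−a) 2^(b²−b)) ≤ α < 1`, there exist a finite group `G` and a matrix `P`
with `χ(M[G;I,Λ;P]) = α`. -/
theorem stmt16 {I Λ : Type*} [Fintype I] [Fintype Λ] (a b : ℕ)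
    (ha : Fintype.card I = a) (hb : Fintype.card Λ = b)
    (ha1 : 1 < a) (hb1 : 1 < b) (α : ℚ)
    (hα1 : ((bell a : ℚ) * bell b) / (2 ^ (a ^ 2 - a) * 2 ^ (b ^ 2 - b)) ≤ α)
    (hα2 : α < 1) :
    ∃ (G : Type) (instG : Group G), Finite G ∧
      ∃ P : Λ → I → G, chi (@rmul G I Λ instG P) = α := by
  exact stmt16' a b ha hb ha1 hb1 α hα1 hα2
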